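/- arXiv:2306.03749 — 4 statements merged into one kernel-verified Lean document; each statement's English description precedes it below -/
import Mathlib

section
/- Let d ≥ 1 and 1 ≤ q < ∞. The set of all finite sums of scaled Gaussians x ↦ ∑_{i=1}^r A_i exp(−|x − c_i|²/L_i²), with r ∈ ℕ, A_i ∈ ℝ, L_i > 0, c_i ∈ ℝ^d, is dense in L^q(ℝ^d). In particular, every probability density p ∈ L^1(ℝ^d) can be approximated in L^1 norm to arbitrary accuracy by such a sum of Gaussians. -/
open MeasureTheory Real
open scoped ENNReal

section GaussAux

open Filter Topology
open scoped RealInnerProductSpace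

noncomputable section
set_option linter.unusedSectionVars false

def IsGaussSum {V : Type*} [NormedAddCommGroup V] (f : V → ℝ) : Prop :=
  ∃ (r : ℕ) (A : Fin r → ℝ) (L : Fin r → ℝ) (c : Fin r → V),
    (∀ i, 0 < L i) ∧ f = fun x => ∑ i, A i * Real.exp (-‖x - c i‖ ^ 2 / (L i) ^ 2)

namespace IsGaussSum

variable {V : Type*} [NormedAddCommGroup V] {f g : V → ℝ}

theorem zero : IsGaussSum (0 : V → ℝ) :=
  ⟨0, ![], ![], ![], by simp, by funext x; simp⟩

theorem gauss (A : ℝ) {L : ℝ} (hL : 0 < L) (c : V) :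
    IsGaussSum (fun x => A * Real.exp (-‖x - c‖ ^ 2 / L ^ 2)) :=
  ⟨1, ![A], ![L], ![c], by simp [hL], by simp⟩

theorem add (hf : IsGaussSum f) (hg : IsGaussSum g) : IsGaussSum (f + g) := by
  obtain ⟨r, A, L, c, hL, rfl⟩ := hf
  obtain ⟨r', A', L', c', hL', rfl⟩ := hg
  refine ⟨r + r', Fin.append A A', Fin.append L L', Fin.append c c', ?_, ?_⟩
  · intro i
    induction i using Fin.addCases with
    | left i => simpa [Fin.append_left] using hL i
    | right i => simpa [Fin.append_right] using hL' i
  · funext x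
    simp [Fin.sum_univ_add, Fin.append_left, Fin.append_right, Pi.add_apply]

theorem smul (a : ℝ) (hf : IsGaussSum f) : IsGaussSum (fun x => a * f x) := by
  obtain ⟨r, A, L, c, hL, rfl⟩ := hf
  exact ⟨r, fun i => a * A i, L, c, hL, by funext x; simp [Finset.mul_sum, mul_assoc]⟩

theorem sum {ι : Type*} (s : Finset ι) (F : ι → V → ℝ)
    (h : ∀ i ∈ s, IsGaussSum (F i)) : IsGaussSum (fun x => ∑ i ∈ s, F i x) := by
  classical
  induction s using Finset.cons_induction with
  | empty => simp only [Finset.sum_empty]; exact zero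
  | cons a s ha ih =>
    have : (fun x => ∑ i ∈ Finset.cons a s ha, F i x)
        = F a + fun x => ∑ i ∈ s, F i x := by
      funext x; rw [Finset.cons_eq_insert, Finset.sum_insert ha]; rfl
    rw [this]
    exact (h a (Finset.mem_cons_self a _)).add (ih fun i hi => h i (Finset.mem_cons_of_mem hi))

end IsGaussSum

theorem gauss_mul_gauss {V : Type*} [NormedAddCommGroup V] [InnerProductSpace ℝ V]
    (a b x : V) {s t : ℝ} (hs : 0 < s) (ht : 0 < t) :
    exp (-‖x-a‖^2/s^2) * exp (-‖x-b‖^2/t^2) =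
    exp (-‖a-b‖^2/(s^2+t^2)) *
      exp (-‖x - ((t^2/(s^2+t^2)) • a + (s^2/(s^2+t^2)) • b)‖^2 /
        (s * t / Real.sqrt (s^2+t^2)) ^ 2) := by
  have hst : (0:ℝ) < s^2 + t^2 := by positivity
  have hN : (s * t / Real.sqrt (s^2+t^2)) ^ 2 = s^2 * t^2 / (s^2+t^2) := by
    rw [div_pow, mul_pow, sq_sqrt hst.le]
  rw [hN, ← exp_add, ← exp_add]
  congr 1
  simp only [← real_inner_self_eq_norm_sq, inner_sub_left, inner_sub_right, inner_add_left,
    inner_add_right, real_inner_smul_left, real_inner_smul_right]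
  rw [real_inner_comm a x, real_inner_comm b x, real_inner_comm b a]
  field_simp
  ring

theorem IsGaussSum.mul {V : Type*} [NormedAddCommGroup V] [InnerProductSpace ℝ V]
    {f g : V → ℝ} (hf : IsGaussSum f) (hg : IsGaussSum g) : IsGaussSum (f * g) := by
  obtain ⟨r, A, L, c, hL, rfl⟩ := hf
  obtain ⟨r', A', L', c', hL', rfl⟩ := hg
  have : ((fun x => ∑ i, A i * Real.exp (-‖x - c i‖ ^ 2 / (L i) ^ 2)) *
      fun x => ∑ j, A' j * Real.exp (-‖x - c' j‖ ^ 2 / (L' j) ^ 2))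
      = fun x => ∑ i : Fin r, ∑ j : Fin r',
          (A i * A' j * exp (-‖c i - c' j‖^2 / ((L i)^2 + (L' j)^2))) *
          exp (-‖x - (((L' j)^2/((L i)^2+(L' j)^2)) • c i
              + ((L i)^2/((L i)^2+(L' j)^2)) • c' j)‖^2 /
            (L i * L' j / Real.sqrt ((L i)^2+(L' j)^2)) ^ 2) := by
    funext x
    rw [Pi.mul_apply, Finset.sum_mul_sum]
    refine Finset.sum_congr rfl fun i _ => Finset.sum_congr rfl fun j _ => ?_
    rw [mul_mul_mul_comm, gauss_mul_gauss (c i) (c' j) x (hL i) (hL' j)]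
    ring
  rw [this]
  refine IsGaussSum.sum _ _ fun i _ => IsGaussSum.sum _ _ fun j _ => ?_
  refine IsGaussSum.gauss _ ?_ _
  have := hL i; have := hL' j
  positivity


variable {V : Type*} [NormedAddCommGroup V] [InnerProductSpace ℝ V] [ProperSpace V]

theorem gauss_tendsto_zero (c : V) {L : ℝ} (hL : 0 < L) :
    Tendsto (fun x : V => exp (-‖x - c‖ ^ 2 / L ^ 2)) (coclosedCompact V) (𝓝 0) := by
  rw [coclosedCompact_eq_cocompact]
  have h1 : Tendsto (fun x : V => ‖x - c‖) (cocompact V) atTop := by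
    refine tendsto_atTop_mono (fun x => norm_sub_norm_le x c) ?_
    exact tendsto_atTop_add_const_right _ _ tendsto_norm_cocompact_atTop
  have h2 : Tendsto (fun x : V => -‖x - c‖ ^ 2 / L ^ 2) (cocompact V) atBot := by
    apply Tendsto.atBot_div_const (by positivity)
    exact tendsto_neg_atBot_iff.mpr ((tendsto_pow_atTop two_ne_zero).comp h1)
  exact Real.tendsto_exp_atBot.comp h2

/-- The extension of a gaussian to the one-point compactification. -/
def gaussCM (c : V) {L : ℝ} (hL : 0 < L) : C(OnePoint V, ℝ) :=
  OnePoint.continuousMapMk ⟨fun x => exp (-‖x - c‖ ^ 2 / L ^ 2), by fun_prop⟩ 0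
    (gauss_tendsto_zero c hL)

@[simp] theorem gaussCM_coe (c : V) {L : ℝ} (hL : 0 < L) (x : V) :
    gaussCM c hL (x : OnePoint V) = exp (-‖x - c‖ ^ 2 / L ^ 2) := rfl

@[simp] theorem gaussCM_infty (c : V) {L : ℝ} (hL : 0 < L) :
    gaussCM c hL OnePoint.infty = 0 := rfl

theorem exists_gaussSum_sup_close (h : V → ℝ) (hc : Continuous h)
    (hsupp : HasCompactSupport h) {δ : ℝ} (hδ : 0 < δ) :
    ∃ (c : ℝ) (s : V → ℝ), IsGaussSum s ∧ ∀ x, |h x - (c + s x)| < δ := by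
  -- extend h to the one-point compactification
  have htend : Tendsto h (coclosedCompact V) (𝓝 0) := by
    refine Tendsto.congr' ?_ tendsto_const_nhds
    filter_upwards [mem_coclosedCompact_iff.mpr
      (by rw [compl_compl, (isClosed_tsupport h).closure_eq]; exact hsupp)] with x hx
    exact (image_eq_zero_of_notMem_tsupport hx).symm
  set htilde : C(OnePoint V, ℝ) := OnePoint.continuousMapMk ⟨h, hc⟩ 0 htend with hhdef
  -- the subalgebra generated by gaussians
  set S : Set C(OnePoint V, ℝ) :=
    {f | ∃ (c : V) (L : ℝ) (hL : 0 < L), f = gaussCM c hL} with hSdef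
  set A : Subalgebra ℝ C(OnePoint V, ℝ) := Algebra.adjoin ℝ S with hAdef
  have hsep : A.SeparatesPoints := by
    intro z w hzw
    induction z using OnePoint.rec with
    | infty =>
      induction w using OnePoint.rec with
      | infty => exact absurd rfl hzw
      | coe w =>
        refine ⟨_, ⟨gaussCM w one_pos, Algebra.subset_adjoin ⟨w, 1, one_pos, rfl⟩, rfl⟩, ?_⟩
        simp only [gaussCM_infty, gaussCM_coe]
        exact (Real.exp_pos _).ne
    | coe z =>
      induction w using OnePoint.rec with
      | infty =>
        refine ⟨_, ⟨gaussCM z one_pos, Algebra.subset_adjoin ⟨z, 1, one_pos, rfl⟩, rfl⟩, ?_⟩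
        simp only [gaussCM_infty, gaussCM_coe]
        exact (Real.exp_pos _).ne'
      | coe w =>
        refine ⟨_, ⟨gaussCM z one_pos, Algebra.subset_adjoin ⟨z, 1, one_pos, rfl⟩, rfl⟩, ?_⟩
        have hzw' : z ≠ w := fun e => hzw (by rw [e])
        have h1 : (0:ℝ) < ‖w - z‖ ^ 2 := by
          have hne : w - z ≠ 0 := sub_ne_zero.mpr (Ne.symm hzw')
          exact pow_pos (norm_pos_iff.mpr hne) 2
        simp only [gaussCM_coe, sub_self, norm_zero]
        apply ne_of_gt
        apply Real.exp_lt_exp.mpr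
        rw [one_pow, div_one, div_one]
        nlinarith
  -- every element of A is constant + gaussian sum on V
  have hstruct : ∀ p ∈ A, ∃ c : ℝ, IsGaussSum (fun x : V => p (x : OnePoint V) - c) := by
    intro p hp
    induction hp using Algebra.adjoin_induction with
    | mem f hf =>
      obtain ⟨c, L, hL, rfl⟩ := hf
      refine ⟨0, ?_⟩
      have : (fun x : V => gaussCM c hL (x : OnePoint V) - 0)
          = fun x : V => (1 : ℝ) * exp (-‖x - c‖ ^ 2 / L ^ 2) := by
        funext x; simp
      rw [this]
      exact IsGaussSum.gauss 1 hL c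
    | algebraMap r =>
      exact ⟨r, by simp; exact IsGaussSum.zero⟩
    | add f g hf hg ihf ihg =>
      obtain ⟨cf, hsf⟩ := ihf
      obtain ⟨cg, hsg⟩ := ihg
      refine ⟨cf + cg, ?_⟩
      have : (fun x : V => (f + g) (x : OnePoint V) - (cf + cg))
          = (fun x : V => f (x : OnePoint V) - cf) + fun x : V => g (x : OnePoint V) - cg := by
        funext x; simp; ring
      rw [this]; exact hsf.add hsg
    | mul f g hf hg ihf ihg =>
      obtain ⟨cf, hsf⟩ := ihf
      obtain ⟨cg, hsg⟩ := ihg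
      refine ⟨cf * cg, ?_⟩
      have : (fun x : V => (f * g) (x : OnePoint V) - cf * cg)
          = ((fun x : V => f (x : OnePoint V) - cf) * fun x : V => g (x : OnePoint V) - cg)
            + ((fun x : V => cg * (f (x : OnePoint V) - cf))
            + fun x : V => cf * (g (x : OnePoint V) - cg)) := by
        funext x; simp; ring
      rw [this]
      exact ((hsf.mul hsg).add ((hsf.smul cg).add (hsg.smul cf)))
  obtain ⟨⟨p, hpA⟩, hpnear⟩ :=
    ContinuousMap.exists_mem_subalgebra_near_continuousMap_of_separatesPoints A hsep htilde δ hδ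
  obtain ⟨c, hgs⟩ := hstruct p hpA
  refine ⟨c, _, hgs, fun x => ?_⟩
  have := ContinuousMap.norm_coe_le_norm (p - htilde) (x : OnePoint V)
  have hx : htilde (x : OnePoint V) = h x := rfl
  calc |h x - (c + (p (x : OnePoint V) - c))| = ‖(p - htilde) (x : OnePoint V)‖ := by
        simp [hx, Real.norm_eq_abs, abs_sub_comm]
    _ ≤ ‖(p : C(OnePoint V, ℝ)) - htilde‖ := this
    _ < δ := hpnear


variable {d : ℕ}

theorem integrable_gauss_expfam {b : ℝ} (hb : 0 < b) (c : EuclideanSpace ℝ (Fin d)) :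
    Integrable (fun x : EuclideanSpace ℝ (Fin d) => exp (-b * ‖x - c‖ ^ 2)) := by
  have hbase : Integrable (fun v : EuclideanSpace ℝ (Fin d) => exp (-b * ‖v‖ ^ 2)) := by
    have h := (GaussianFourier.integrable_cexp_neg_mul_sq_norm_add (V := EuclideanSpace ℝ (Fin d))
      (b := (b : ℂ)) (by simpa using hb) 0 0).norm
    refine h.congr ?_
    filter_upwards with v
    rw [Complex.norm_exp]
    norm_num
    left
    norm_cast
  have := (measurePreserving_sub_right (volume : Measure (EuclideanSpace ℝ (Fin d))) c)
  exact (this.integrable_comp hbase.aestronglyMeasurable).mpr hbase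

theorem memℒp_gauss {q : ℝ≥0∞} (hq0 : q ≠ 0) (hqt : q ≠ ⊤)
    {L : ℝ} (hL : 0 < L) (c : EuclideanSpace ℝ (Fin d)) :
    MemLp (fun x : EuclideanSpace ℝ (Fin d) => exp (-‖x - c‖ ^ 2 / L ^ 2)) q := by
  set f : EuclideanSpace ℝ (Fin d) → ℝ := fun x => exp (-‖x - c‖ ^ 2 / L ^ 2) with hf
  have hcont : Continuous f := by fun_prop
  have key : MemLp (fun x => ‖f x‖ ^ q.toReal) (q / q) := by
    rw [ENNReal.div_self hq0 hqt, memLp_one_iff_integrable]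
    have : (fun x => ‖f x‖ ^ q.toReal)
        = fun x : EuclideanSpace ℝ (Fin d) => exp (-(q.toReal / L ^ 2) * ‖x - c‖ ^ 2) := by
      funext x
      rw [Real.norm_eq_abs, abs_of_pos (exp_pos _), ← Real.exp_mul]
      ring_nf
    rw [this]
    exact integrable_gauss_expfam (by
      have := ENNReal.toReal_pos hq0 hqt
      positivity) c
  exact (memLp_norm_rpow_iff hcont.aestronglyMeasurable hq0 hqt).mp key


theorem IsGaussSum.continuous {V : Type*} [NormedAddCommGroup V] {f : V → ℝ}
    (hf : IsGaussSum f) : Continuous f := by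
  obtain ⟨r, A, L, c, hL, rfl⟩ := hf
  fun_prop

theorem IsGaussSum.memLp {d : ℕ} {q : ℝ≥0∞} (hq0 : q ≠ 0) (hqt : q ≠ ⊤)
    {f : EuclideanSpace ℝ (Fin d) → ℝ} (hf : IsGaussSum f) : MemLp f q := by
  obtain ⟨r, A, L, c, hL, rfl⟩ := hf
  exact memLp_finset_sum Finset.univ fun i _ =>
    (memℒp_gauss hq0 hqt (hL i) (c i)).const_mul (A i)

theorem gaussian_dense_in_Lp (d : ℕ) (q : ℝ≥0∞) [hq1 : Fact (1 ≤ q)] (hq2 : q ≠ ⊤) :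
    Dense {f : Lp ℝ q (volume : Measure (EuclideanSpace ℝ (Fin d))) |
      ∃ (r : ℕ) (A : Fin r → ℝ) (L : Fin r → ℝ) (c : Fin r → EuclideanSpace ℝ (Fin d)),
        (∀ i, 0 < L i) ∧
        (⇑f) =ᵐ[volume] fun x => ∑ i, A i * Real.exp (-‖x - c i‖ ^ 2 / (L i) ^ 2)} := by
  have hq0 : q ≠ 0 := by
    intro h
    have := hq1.out
    rw [h] at this
    simp at this
  rw [Metric.dense_iff]
  intro f ε hε
  -- Step 1: approximate by a continuous compactly supported function within ε/3
  have hε3 : (0:ℝ) < ε / 3 := by linarith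
  obtain ⟨g, hgsupp, hgclose, hgcont, hgmem⟩ :=
    (Lp.memLp f).exists_hasCompactSupport_eLpNorm_sub_le hq2
      (ε := ENNReal.ofReal (ε / 3)) (by simp [hε3, hε3.le])
  -- the reference gaussian
  set G : EuclideanSpace ℝ (Fin d) → ℝ := fun x => exp (-‖x - 0‖ ^ 2 / 1 ^ 2) with hGdef
  have hGgs : IsGaussSum G := by
    have := IsGaussSum.gauss (V := EuclideanSpace ℝ (Fin d)) 1 one_pos 0
    simpa [hGdef] using this
  have hGmem : MemLp G q := memℒp_gauss hq0 hq2 one_pos 0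
  have hGpos : ∀ x, 0 < G x := fun x => exp_pos _
  set M : ℝ := (eLpNorm G q volume).toReal with hMdef
  have hM0 : 0 ≤ M := ENNReal.toReal_nonneg
  set δ : ℝ := (ε / 3) / (M + 1) with hδdef
  have hδ : 0 < δ := div_pos hε3 (by linarith)
  -- Step 2: approximate h = g * e^{|x|²} uniformly by c + s
  set h : EuclideanSpace ℝ (Fin d) → ℝ := fun x => g x * exp (‖x‖ ^ 2) with hhdef
  have hhcont : Continuous h := by fun_prop
  have hhsupp : HasCompactSupport h := hgsupp.mul_right
  obtain ⟨c, s, hsgs, hclose⟩ := exists_gaussSum_sup_close h hhcont hhsupp hδ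
  -- Step 3: the approximant
  set t : EuclideanSpace ℝ (Fin d) → ℝ := fun x => G x * (c + s x) with htdef
  have htgs : IsGaussSum t := by
    have : t = (fun x => c * G x) + (G * s) := by
      funext x; simp [htdef]; ring
    rw [this]
    exact (hGgs.smul c).add (hGgs.mul hsgs)
  have htmem : MemLp t q := htgs.memLp hq0 hq2
  -- pointwise bound |g - t| ≤ δ G
  have hGh : ∀ x, G x * h x = g x := by
    intro x
    simp only [hhdef, hGdef, sub_zero, one_pow, div_one]
    rw [← mul_assoc, mul_comm (exp _) (g x), mul_assoc, ← Real.exp_add]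
    simp
  have hptwise : ∀ x, ‖g x - t x‖ ≤ (δ • G) x := by
    intro x
    rw [← hGh x]
    simp only [htdef, Pi.smul_apply, smul_eq_mul]
    rw [← mul_sub, norm_mul]
    rw [Real.norm_eq_abs, Real.norm_eq_abs, abs_of_pos (hGpos x), mul_comm δ (G x)]
    exact mul_le_mul_of_nonneg_left (le_of_lt (hclose x)) (hGpos x).le
  -- eLpNorm bound
  have hbound : eLpNorm (g - t) q volume ≤ ENNReal.ofReal (ε / 3) := by
    calc eLpNorm (g - t) q volume ≤ eLpNorm (δ • G) q volume := eLpNorm_mono_real hptwise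
      _ = ‖δ‖ₑ * eLpNorm G q volume := eLpNorm_const_smul δ G q volume
      _ ≤ ENNReal.ofReal δ * ENNReal.ofReal (M + 1) := by
          apply mul_le_mul'
          · simp [Real.enorm_eq_ofReal hδ.le]
          · calc eLpNorm G q volume = ENNReal.ofReal M := by
                  rw [hMdef, ENNReal.ofReal_toReal hGmem.eLpNorm_lt_top.ne]
              _ ≤ ENNReal.ofReal (M + 1) := ENNReal.ofReal_le_ofReal (by linarith)
      _ = ENNReal.ofReal (δ * (M + 1)) := (ENNReal.ofReal_mul hδ.le).symm
      _ = ENNReal.ofReal (ε / 3) := by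
          rw [hδdef, div_mul_cancel₀]
          linarith
  -- combine
  set y := htmem.toLp t with hydef
  refine ⟨y, Metric.mem_ball.mpr ?_, ?_⟩
  · have hae : (⇑(y - f)) =ᵐ[volume] (t - g) + (g - ⇑f) := by
      filter_upwards [Lp.coeFn_sub y f, htmem.coeFn_toLp] with x h1 h2
      rw [h1]; simp only [Pi.sub_apply, Pi.add_apply, hydef, h2]
      ring
    have h1 : eLpNorm (⇑(y - f)) q volume ≤ ENNReal.ofReal (ε/3) + ENNReal.ofReal (ε/3) := by
      rw [eLpNorm_congr_ae hae]
      refine le_trans (eLpNorm_add_le ((htmem.sub hgmem).aestronglyMeasurable)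
        ((hgmem.sub (Lp.memLp f)).aestronglyMeasurable) hq1.out) ?_
      gcongr
      · rw [show t - g = -(g - t) by ring]
        rw [eLpNorm_neg]
        exact hbound
      · rw [show g - ⇑f = -(⇑f - g) by ring]
        rw [eLpNorm_neg]
        exact hgclose
    have : dist y f = (eLpNorm (⇑(y - f)) q volume).toReal := by
      rw [dist_eq_norm, Lp.norm_def]
    rw [this]
    have h2 : eLpNorm (⇑(y - f)) q volume ≤ ENNReal.ofReal (2 * (ε/3)) := by
      refine h1.trans (le_of_eq ?_)
      rw [← ENNReal.ofReal_add hε3.le hε3.le]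
      congr 1
      ring
    have := ENNReal.toReal_le_of_le_ofReal (by linarith) h2
    linarith
  · obtain ⟨r, A, L, cc, hL, hrep⟩ := htgs
    exact ⟨r, A, L, cc, hL, htmem.coeFn_toLp.trans (by rw [hrep])⟩


end
end GaussAux

/-- Finite sums of scaled Gaussians are dense in `L^q(ℝ^d)` for `1 ≤ q < ∞`; in
particular every probability density in `L¹(ℝ^d)` can be approximated in `L¹` norm
to arbitrary accuracy by such a sum of Gaussians. -/
theorem gaussian_sums_dense
    (d : ℕ) (hd : 1 ≤ d) (q : ℝ≥0∞) [hq1 : Fact (1 ≤ q)] (hq2 : q ≠ ⊤) :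
    Dense {f : Lp ℝ q (volume : Measure (EuclideanSpace ℝ (Fin d))) |
      ∃ (r : ℕ) (A : Fin r → ℝ) (L : Fin r → ℝ) (c : Fin r → EuclideanSpace ℝ (Fin d)),
        (∀ i, 0 < L i) ∧
        (⇑f) =ᵐ[volume] fun x => ∑ i, A i * Real.exp (-‖x - c i‖ ^ 2 / (L i) ^ 2)}
    ∧
    ∀ p : EuclideanSpace ℝ (Fin d) → ℝ, Integrable p → (∀ x, 0 ≤ p x) → (∫ x, p x) = 1 →
      ∀ ε : ℝ, 0 < ε →
        ∃ (r : ℕ) (A : Fin r → ℝ) (L : Fin r → ℝ) (c : Fin r → EuclideanSpace ℝ (Fin d)),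
          (∀ i, 0 < L i) ∧
          (∫ x, |p x - ∑ i, A i * Real.exp (-‖x - c i‖ ^ 2 / (L i) ^ 2)|) < ε := by
  refine ⟨gaussian_dense_in_Lp d q hq2, ?_⟩
  intro p hp hpos hint ε hε
  have hdense := gaussian_dense_in_Lp d 1 ENNReal.one_ne_top
  have hpmem : MemLp p 1 (volume : Measure (EuclideanSpace ℝ (Fin d))) :=
    memLp_one_iff_integrable.mpr hp
  set f0 := hpmem.toLp p with hf0def
  obtain ⟨y, hyS, hdist⟩ := Metric.mem_closure_iff.mp (hdense f0) ε hε
  obtain ⟨r, A, L, cc, hL, hyrep⟩ := hyS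
  refine ⟨r, A, L, cc, hL, ?_⟩
  set s : EuclideanSpace ℝ (Fin d) → ℝ :=
    fun x => ∑ i, A i * Real.exp (-‖x - cc i‖ ^ 2 / (L i) ^ 2) with hsdef
  have hsgs : IsGaussSum s := ⟨r, A, L, cc, hL, rfl⟩
  have hsmem : MemLp s 1 (volume : Measure (EuclideanSpace ℝ (Fin d))) :=
    hsgs.memLp one_ne_zero ENNReal.one_ne_top
  have hy : y = hsmem.toLp s := by
    apply Lp.ext (μ := (volume : Measure (EuclideanSpace ℝ (Fin d)))) (p := (1 : ℝ≥0∞))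
    exact hyrep.trans hsmem.coeFn_toLp.symm
  have hintegral : (∫ x, |p x - s x|) = (eLpNorm (p - s) 1 volume).toReal := by
    have h1 : (∫ x, |p x - s x|) = ∫ x, ‖(p - s) x‖ := by
      simp [Real.norm_eq_abs]
    rw [h1, integral_norm_eq_lintegral_enorm (hpmem.sub hsmem).aestronglyMeasurable,
      eLpNorm_one_eq_lintegral_enorm]
  have hdist' : dist f0 y = (eLpNorm (p - s) 1 volume).toReal := by
    rw [hy, hf0def, dist_eq_norm, ← MemLp.toLp_sub hpmem hsmem, Lp.norm_toLp]
  rw [hintegral, ← hdist']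
  exact hdist
end

section
/- Let γ > 0, σ > 0, and for t > 0 define A(t) = sqrt(γ / (π σ² (1 − exp(−2γt)))), L(t) = (γ / (σ² (1 − exp(−2γt))))^{−1/2}, and c(t) = 0. Then these functions satisfy the symbolic RONS ODE system for the Ornstein–Uhlenbeck process: Ȧ = A(γ − σ²/L²), L̇ = σ²/L − γL, ċ = −γc for all t > 0, and moreover the normalization constraint √π · A(t) · L(t) = 1 holds for all t > 0. -/
open Real

/-- The parameter functions `A(t) = √(γ/(πσ²(1−e^{−2γt})))`,
`L(t) = (γ/(σ²(1−e^{−2γt})))^{−1/2}` and `c(t) = 0` satisfy the symbolic RONS ODE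
system for the Ornstein–Uhlenbeck process, `Ȧ = A(γ − σ²/L²)`, `L̇ = σ²/L − γL`,
`ċ = −γc`, together with the normalization constraint `√π · A(t) · L(t) = 1`,
for all `t > 0`. -/
theorem ou_rons_ode_solution
    (γ σ : ℝ) (hγ : 0 < γ) (hσ : 0 < σ)
    (A L c : ℝ → ℝ)
    (hA : ∀ t, A t = Real.sqrt (γ / (π * σ ^ 2 * (1 - Real.exp (-2 * γ * t)))))
    (hL : ∀ t, L t = (γ / (σ ^ 2 * (1 - Real.exp (-2 * γ * t)))) ^ (-(1 / 2) : ℝ))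
    (hc : ∀ t, c t = 0) :
    ∀ t : ℝ, 0 < t →
      deriv A t = A t * (γ - σ ^ 2 / (L t) ^ 2) ∧
      deriv L t = σ ^ 2 / L t - γ * L t ∧
      deriv c t = -γ * c t ∧
      Real.sqrt π * A t * L t = 1 := by
  intro t ht
  have hπ : (0:ℝ) < π := Real.pi_pos
  set k : ℝ := Real.exp (-2 * γ * t) with hkdef
  have hk : 0 < k := Real.exp_pos _
  have hk1 : k < 1 := by
    rw [hkdef, Real.exp_lt_one_iff]
    nlinarith
  have hu : 0 < 1 - k := by linarith
  -- derivative of the inner exponential part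
  have hexp : HasDerivAt (fun s : ℝ => 1 - Real.exp (-2 * γ * s)) (2 * γ * k) t := by
    have h1 : HasDerivAt (fun s : ℝ => -2 * γ * s) (-2 * γ) t := by
      simpa using (hasDerivAt_id t).const_mul (-2 * γ)
    have h2 : HasDerivAt (fun s : ℝ => Real.exp (-2 * γ * s)) (k * (-2 * γ)) t := h1.exp
    have h3 := (hasDerivAt_const t (1:ℝ)).sub h2
    exact h3.congr_deriv (by ring)
  -- positivity facts
  have hden : 0 < π * σ ^ 2 * (1 - k) := by positivity
  have hden2 : 0 < σ ^ 2 * (1 - k) := by positivity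
  have hf : 0 < γ / (π * σ ^ 2 * (1 - k)) := by positivity
  have hg : 0 < γ / (σ ^ 2 * (1 - k)) := by positivity
  -- abbreviations for the values at t
  have hAt : A t = Real.sqrt (γ / (π * σ ^ 2 * (1 - k))) := hA t
  have hLt : L t = (γ / (σ ^ 2 * (1 - k))) ^ (-(1 / 2) : ℝ) := hL t
  have hApos : 0 < A t := by rw [hAt]; exact Real.sqrt_pos.mpr hf
  have hLpos : 0 < L t := by rw [hLt]; exact Real.rpow_pos_of_pos hg _
  -- key algebraic relations
  have hAsq : A t ^ 2 * (π * σ ^ 2 * (1 - k)) = γ := by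
    rw [hAt, Real.sq_sqrt hf.le]
    field_simp
  have hLinv : L t ^ 2 = (γ / (σ ^ 2 * (1 - k)))⁻¹ := by
    rw [hLt, ← Real.rpow_natCast ((γ / (σ ^ 2 * (1 - k))) ^ (-(1 / 2) : ℝ)) 2,
      ← Real.rpow_mul hg.le]
    norm_num [Real.rpow_neg_one]
  have hLsq : L t ^ 2 * γ = σ ^ 2 * (1 - k) := by
    rw [hLinv, inv_div]
    field_simp
  -- derivative of A
  have hAd : HasDerivAt A
      ((0 * (π * σ ^ 2 * (1 - k)) - γ * (π * σ ^ 2 * (2 * γ * k))) / (π * σ ^ 2 * (1 - k)) ^ 2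
        / (2 * Real.sqrt (γ / (π * σ ^ 2 * (1 - k))))) t := by
    have hdiv : HasDerivAt (fun s : ℝ => γ / (π * σ ^ 2 * (1 - Real.exp (-2 * γ * s))))
        ((0 * (π * σ ^ 2 * (1 - k)) - γ * (π * σ ^ 2 * (2 * γ * k))) / (π * σ ^ 2 * (1 - k)) ^ 2) t := by
      exact (hasDerivAt_const t γ).div (hexp.const_mul (π * σ ^ 2)) hden.ne'
    have := hdiv.sqrt hf.ne'
    have hAeq : A = fun s : ℝ => Real.sqrt (γ / (π * σ ^ 2 * (1 - Real.exp (-2 * γ * s)))) :=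
      funext hA
    rw [hAeq]
    exact this
  -- derivative of L
  have hLd : HasDerivAt L
      ((0 * (σ ^ 2 * (1 - k)) - γ * (σ ^ 2 * (2 * γ * k))) / (σ ^ 2 * (1 - k)) ^ 2
        * (-(1 / 2)) * (γ / (σ ^ 2 * (1 - k))) ^ ((-(1 / 2) : ℝ) - 1)) t := by
    have hdiv : HasDerivAt (fun s : ℝ => γ / (σ ^ 2 * (1 - Real.exp (-2 * γ * s))))
        ((0 * (σ ^ 2 * (1 - k)) - γ * (σ ^ 2 * (2 * γ * k))) / (σ ^ 2 * (1 - k)) ^ 2) t := by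
      exact (hasDerivAt_const t γ).div (hexp.const_mul (σ ^ 2)) hden2.ne'
    have := hdiv.rpow_const (p := (-(1 / 2) : ℝ)) (Or.inl hg.ne')
    have hLeq : L = fun s : ℝ => (γ / (σ ^ 2 * (1 - Real.exp (-2 * γ * s)))) ^ (-(1 / 2) : ℝ) :=
      funext hL
    rw [hLeq]
    exact this
  refine ⟨?_, ?_, ?_, ?_⟩
  · -- A equation
    rw [hAd.deriv]
    have hs : Real.sqrt (γ / (π * σ ^ 2 * (1 - k))) = A t := hAt.symm
    rw [hs]
    have hσL : σ ^ 2 / L t ^ 2 = γ / (1 - k) := by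
      rw [div_eq_div_iff (by positivity) hu.ne']
      linear_combination -hLsq
    rw [hσL]
    rw [div_eq_iff (by positivity : (2 * A t : ℝ) ≠ 0)]
    rw [div_eq_iff (by positivity : ((π * σ ^ 2 * (1 - k)) ^ 2 : ℝ) ≠ 0)]
    have h2 : A t * (γ - γ / (1 - k)) * (2 * A t) * (π * σ ^ 2 * (1 - k)) ^ 2
        = 2 * (A t ^ 2 * (π * σ ^ 2 * (1 - k))) * (π * σ ^ 2) * ((1 - k) * γ - γ) := by
      field_simp
    rw [h2, hAsq]
    ring
  · -- L equation
    rw [hLd.deriv]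
    have hrp : (γ / (σ ^ 2 * (1 - k))) ^ ((-(1 / 2) : ℝ) - 1) = L t ^ 3 := by
      rw [hLt, ← Real.rpow_natCast ((γ / (σ ^ 2 * (1 - k))) ^ (-(1 / 2) : ℝ)) 3,
        ← Real.rpow_mul hg.le]
      norm_num
    rw [hrp]
    have hL3 : (0:ℝ) < L t ^ 3 := by positivity
    field_simp
    linear_combination (2 * k * (γ * L t ^ 2 + σ ^ 2 * (1 - k))
      + 2 * σ ^ 2 * (1 - k) ^ 2) * hLsq
  · simp [funext hc, hc]
  · -- normalization
    have hx : (Real.sqrt π * A t * L t) ^ 2 = 1 := by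
      have h1 : Real.sqrt π ^ 2 = π := Real.sq_sqrt hπ.le
      have : (Real.sqrt π * A t * L t) ^ 2 = π * (A t ^ 2 * L t ^ 2) := by
        rw [mul_pow, mul_pow, h1]; ring
      rw [this]
      have hγne : (γ:ℝ) ≠ 0 := hγ.ne'
      have h2 : A t ^ 2 = γ / (π * σ ^ 2 * (1 - k)) := by
        rw [hAt]; exact Real.sq_sqrt hf.le
      have h3 : L t ^ 2 = σ ^ 2 * (1 - k) / γ := by
        rw [eq_div_iff hγne]; exact hLsq
      rw [h2, h3]
      field_simp
    have hpos : 0 < Real.sqrt π * A t * L t := by positivity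
    nlinarith [hx, hpos]
end

section
/- Let a₁, a₂, a₃ ∈ ℝ, σ > 0, C ∈ ℝ, and define p(x,y) = C exp[(−a₁a₂x² − (1/2)a₂a₃x⁴ + a₂y²)/σ²]. Then p is a stationary solution of the Fokker–Planck equation of the stochastic Duffing oscillator: for all (x,y) ∈ ℝ², −[y ∂p/∂x + a₂ p + (a₁x + a₂y + a₃x³) ∂p/∂y] + (σ²/2) ∂²p/∂y² = 0. -/
open Real

/-
Write `p = C exp((V(x) + a₂y²)/σ²)` with `V' = -2a₂(a₁x + a₃x³)`. Then the transport terms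
`y ∂ₓp + (a₁x + a₂y + a₃x³) ∂ᵧp` collapse to `2a₂²y²p/σ²`, while the diffusion term
`(σ²/2) ∂ᵧ²p = (2a₂²y²/σ² + a₂) p` cancels them together with `a₂ p`.
-/

section GaussianExp

variable (C A b s : ℝ)

theorem hasDerivAt_const_mul_exp_add_mul_sq_div (t : ℝ) :
    HasDerivAt (fun t => C * exp ((A + b * t ^ 2) / s))
      (C * exp ((A + b * t ^ 2) / s) * (2 * b * t / s)) t := by
  have hexponent : HasDerivAt (fun t => (A + b * t ^ 2) / s) (2 * b * t / s) t := by
    refine ((((hasDerivAt_pow 2 t).const_mul b).const_add A).div_const s).congr_deriv ?_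
    push_cast
    ring
  exact (hexponent.exp.const_mul C).congr_deriv (by ring)

theorem deriv_const_mul_exp_add_mul_sq_div :
    deriv (fun t => C * exp ((A + b * t ^ 2) / s))
      = fun t => C * exp ((A + b * t ^ 2) / s) * (2 * b * t / s) :=
  funext fun t => (hasDerivAt_const_mul_exp_add_mul_sq_div C A b s t).deriv

theorem deriv_deriv_const_mul_exp_add_mul_sq_div (t : ℝ) :
    deriv (deriv (fun t => C * exp ((A + b * t ^ 2) / s))) t
      = C * exp ((A + b * t ^ 2) / s) * ((2 * b * t / s) ^ 2 + 2 * b / s) := by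
  have hlinear : HasDerivAt (fun t => 2 * b * t / s) (2 * b / s) t := by
    simpa using ((hasDerivAt_id t).const_mul (2 * b)).div_const s
  rw [deriv_const_mul_exp_add_mul_sq_div]
  exact ((hasDerivAt_const_mul_exp_add_mul_sq_div C A b s t).mul hlinear).deriv.trans (by ring)

end GaussianExp

theorem hasDerivAt_const_mul_exp_quartic_div (C α β B s x : ℝ) :
    HasDerivAt (fun x => C * exp ((α * x ^ 2 - β * x ^ 4 + B) / s))
      (C * exp ((α * x ^ 2 - β * x ^ 4 + B) / s) * ((2 * α * x - 4 * β * x ^ 3) / s)) x := by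
  have hexponent : HasDerivAt (fun x => (α * x ^ 2 - β * x ^ 4 + B) / s)
      ((2 * α * x - 4 * β * x ^ 3) / s) x := by
    refine (((((hasDerivAt_pow 2 x).const_mul α).sub
      ((hasDerivAt_pow 4 x).const_mul β)).add_const B).div_const s).congr_deriv ?_
    push_cast
    ring
  exact (hexponent.exp.const_mul C).congr_deriv (by ring)

/-- The density `p(x,y) = C exp[(−a₁a₂x² − ½a₂a₃x⁴ + a₂y²)/σ²]` is a stationary
solution of the Fokker–Planck equation of the stochastic Duffing oscillator:
`−[y ∂p/∂x + a₂ p + (a₁x + a₂y + a₃x³) ∂p/∂y] + (σ²/2) ∂²p/∂y² = 0` on `ℝ²`. -/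
theorem duffing_fokker_planck_stationary
    (a₁ a₂ a₃ σ C : ℝ) (hσ : 0 < σ)
    (p : ℝ → ℝ → ℝ)
    (hp : ∀ x y, p x y =
      C * Real.exp ((-(a₁ * a₂) * x ^ 2 - (1 / 2) * a₂ * a₃ * x ^ 4 + a₂ * y ^ 2) / σ ^ 2)) :
    ∀ x y : ℝ,
      -(y * deriv (fun x' => p x' y) x + a₂ * p x y
          + (a₁ * x + a₂ * y + a₃ * x ^ 3) * deriv (fun y' => p x y') y)
        + σ ^ 2 / 2 * deriv (fun y' => deriv (fun y'' => p x y'') y') y = 0 := by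
  intro x y
  have hσ2 : σ ^ 2 ≠ 0 := pow_ne_zero 2 hσ.ne'
  simp only [hp]
  rw [(hasDerivAt_const_mul_exp_quartic_div C _ _ _ _ x).deriv,
    (hasDerivAt_const_mul_exp_add_mul_sq_div C _ a₂ _ y).deriv,
    deriv_deriv_const_mul_exp_add_mul_sq_div]
  field_simp
  ring
end

section
/- Let d ≥ 1, γ ∈ ℝ, ν > 0, let a : ℝ → ℝ be continuous, and let p : ℝ → 𝓢(ℝ^d, ℝ) be a continuously differentiable map into the Schwartz space such that for all t and all x ∈ ℝ^d: ∂p/∂t (x,t) = ∑_{i=1}^d [ −∂/∂x_i ( (a(t) − x_i + (γ/d)∑_{j=1}^d (x_j − x_i)) p(x,t) ) + ν ∂²p/∂x_i² (x,t) ], and suppose ∫_{ℝ^d} p(x,t) dx = 1 for all t. Define X̄_i(t) = ∫_{ℝ^d} x_i p(x,t) dx. Then each X̄_i is differentiable and satisfies the ODE system d X̄_i/dt = a(t) − X̄_i + (γ/d) ∑_{j=1}^d ( X̄_j − X̄_i ) for i = 1, …, d. -/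
open Real MeasureTheory Filter Topology SchwartzMap

lemma affine_hasTemperateGrowth {E : Type*} [NormedAddCommGroup E] [NormedSpace ℝ E]
    (c : ℝ) (T : E →L[ℝ] ℝ) : Function.HasTemperateGrowth (fun y => c + T y) := by
  apply Function.HasTemperateGrowth.of_fderiv (k := 1) (C := |c| + ‖T‖)
  · have : (fderiv ℝ (fun y : E => c + T y)) = fun _ => (T : E →L[ℝ] ℝ) := by
      ext1 y
      rw [fderiv_const_add]
      exact T.fderiv
    rw [this]
    exact .const _
  · exact T.differentiable.const_add c
  · intro x
    have h1 : ‖c + T x‖ ≤ |c| + ‖T‖ * ‖x‖ := by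
      rw [← Real.norm_eq_abs]
      exact (norm_add_le c (T x)).trans (add_le_add_right (T.le_opNorm x) _)
    refine h1.trans ?_
    have h0 : (0:ℝ) ≤ ‖T‖ := norm_nonneg _
    have h2 : (0:ℝ) ≤ |c| := abs_nonneg _
    nlinarith [norm_nonneg x]

/-- Partial derivative on Schwartz space (port helper). -/
noncomputable def pderivCLM (𝕜 : Type*) [RCLike 𝕜] {E F : Type*} [NormedAddCommGroup E]
    [NormedSpace ℝ E] [NormedAddCommGroup F] [NormedSpace ℝ F] [NormedSpace 𝕜 F]
    [SMulCommClass ℝ 𝕜 F] (m : E) : 𝓢(E, F) →L[𝕜] 𝓢(E, F) :=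
  SchwartzMap.evalCLM 𝕜 E F m ∘L fderivCLM 𝕜 E F

lemma pderivCLM_apply (𝕜 : Type*) [RCLike 𝕜] {E F : Type*} [NormedAddCommGroup E]
    [NormedSpace ℝ E] [NormedAddCommGroup F] [NormedSpace ℝ F] [NormedSpace 𝕜 F]
    [SMulCommClass ℝ 𝕜 F] (m : E) (f : 𝓢(E, F)) (x : E) :
    pderivCLM 𝕜 m f x = fderiv ℝ f x m := rfl

variable {d : ℕ}

local notation "E" => EuclideanSpace ℝ (Fin d)

lemma proj_htg (i : Fin d) : Function.HasTemperateGrowth (fun x : E => x i) :=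
  (EuclideanSpace.proj (𝕜 := ℝ) i).hasTemperateGrowth

/-- `x ↦ f x * x i` as a Schwartz map. -/
noncomputable def mulProj (i : Fin d) : 𝓢(E, ℝ) →L[ℝ] 𝓢(E, ℝ) :=
  bilinLeftCLM (ContinuousLinearMap.mul ℝ ℝ) (proj_htg i)

@[simp] lemma mulProj_apply (i : Fin d) (f : 𝓢(E, ℝ)) (x : E) :
    mulProj i f x = f x * x i := rfl

lemma integrable_proj_mul (i : Fin d) (f : 𝓢(E, ℝ)) :
    Integrable (fun x : E => x i * f x) := by
  exact ((mulProj i f).integrable (μ := volume)).congr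
    (Eventually.of_forall fun x => by simp [mul_comm])

lemma integral_proj_mul_fderiv (i : Fin d) (v : E) (g : 𝓢(E, ℝ)) :
    ∫ x : E, x i * fderiv ℝ g x v = -(v i * ∫ x : E, g x) := by
  have hf : ∀ x : E, fderiv ℝ (fun y : E => y i) x = EuclideanSpace.proj (𝕜 := ℝ) i :=
    fun x => (EuclideanSpace.proj (𝕜 := ℝ) i).fderiv
  have h := integral_mul_fderiv_eq_neg_fderiv_mul_of_integrable
      (μ := (volume : Measure E)) (f := fun x : E => x i) (g := (g : E → ℝ)) (v := v)
      ?_ ?_ ?_ ?_ (fun x _ => g.differentiableAt)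
  · rw [h, ← integral_const_mul, neg_inj]
    apply integral_congr_ae
    filter_upwards with x
    rw [hf]
    simp
  · simp only [hf]
    simpa using (g.integrable (μ := volume)).const_mul (v i)
  · have := integrable_proj_mul i (pderivCLM ℝ v g)
    simpa [pderivCLM_apply] using this
  · exact integrable_proj_mul i g
  · exact fun x _ => (EuclideanSpace.proj (𝕜 := ℝ) i).differentiableAt

lemma integral_fderiv_schwartz (v : E) (g : 𝓢(E, ℝ)) :
    ∫ x : E, fderiv ℝ g x v = 0 := by
  have h := integral_mul_fderiv_eq_neg_fderiv_mul_of_integrable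
      (μ := (volume : Measure E)) (f := fun _ : E => (1:ℝ)) (g := (g : E → ℝ)) (v := v)
      ?_ ?_ ?_ (fun x _ => differentiableAt_const (1:ℝ)) (fun x _ => g.differentiableAt)
  · simpa [fderiv_fun_const] using h
  · simp [fderiv_fun_const]
  · simp only [one_mul]
    exact (pderivCLM ℝ v g).integrable (μ := volume)
  · simpa using g.integrable (μ := volume)

/-- Evolution of the mean for particles in a harmonic trap: if `t ↦ p(·,t)` is a
continuously differentiable curve in Schwartz space solving the Fokker–Planck equation
`∂p/∂t = ∑ᵢ [−∂ᵢ((a(t) − xᵢ + (γ/d)∑ⱼ(xⱼ − xᵢ)) p) + ν ∂ᵢ² p]` with unit total mass,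
then the means `X̄ᵢ(t) = ∫ xᵢ p(x,t) dx` satisfy
`dX̄ᵢ/dt = a(t) − X̄ᵢ + (γ/d)∑ⱼ(X̄ⱼ − X̄ᵢ)`. -/
theorem harmonic_trap_mean_evolution
    (d : ℕ) (hd : 1 ≤ d) (γ : ℝ) (ν : ℝ) (hν : 0 < ν)
    (a : ℝ → ℝ) (ha : Continuous a)
    (p p' : ℝ → SchwartzMap (EuclideanSpace ℝ (Fin d)) ℝ)
    (hderiv : ∀ t : ℝ, Tendsto (fun h : ℝ => h⁻¹ • (p (t + h) - p t)) (𝓝[≠] 0) (𝓝 (p' t)))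
    (hcont : Continuous p')
    (hpde : ∀ t : ℝ, ∀ x : EuclideanSpace ℝ (Fin d),
      p' t x = ∑ i : Fin d,
        (-(fderiv ℝ (fun y : EuclideanSpace ℝ (Fin d) =>
              (a t - y i + (γ / (d : ℝ)) * ∑ j : Fin d, (y j - y i)) * p t y) x
            (EuclideanSpace.single i 1))
          + ν * fderiv ℝ (fun y => fderiv ℝ (p t) y (EuclideanSpace.single i 1)) x
              (EuclideanSpace.single i 1)))
    (hmass : ∀ t : ℝ, (∫ x : EuclideanSpace ℝ (Fin d), p t x) = 1)
    (Xbar : Fin d → ℝ → ℝ)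
    (hXbar : ∀ i t, Xbar i t = ∫ x : EuclideanSpace ℝ (Fin d), x i * p t x) :
    ∀ (i : Fin d) (t : ℝ),
      HasDerivAt (Xbar i)
        (a t - Xbar i t + (γ / (d : ℝ)) * ∑ j : Fin d, (Xbar j t - Xbar i t)) t := by
  intro i t
  have hdnz : (d : ℝ) ≠ 0 := Nat.cast_ne_zero.2 (by omega)
  -- The mean as a continuous linear functional on Schwartz space
  set M : 𝓢(EuclideanSpace ℝ (Fin d), ℝ) →L[ℝ] ℝ :=
    (integralCLM ℝ (volume : Measure (EuclideanSpace ℝ (Fin d)))).comp (mulProj i) with hM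
  have hMf : ∀ f : 𝓢(EuclideanSpace ℝ (Fin d), ℝ), M f = ∫ x, x i * f x := by
    intro f
    rw [hM]
    simp only [ContinuousLinearMap.comp_apply, integralCLM_apply]
    exact integral_congr_ae (Eventually.of_forall fun x => by simp [mul_comm])
  have hXM : ∀ u, Xbar i u = M (p u) := fun u => by rw [hXbar, hMf]
  -- differentiability with derivative M (p' t)
  have hD : HasDerivAt (Xbar i) (M (p' t)) t := by
    rw [hasDerivAt_iff_tendsto_slope_zero]
    have h2 := (M.continuous.tendsto (p' t)).comp (hderiv t)
    refine Tendsto.congr (fun h => ?_) h2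
    simp only [Function.comp_apply, M.map_smul, M.map_sub, hXM, smul_eq_mul]
  -- set up the drift as an affine function
  set v : Fin d → EuclideanSpace ℝ (Fin d) := fun k => EuclideanSpace.single k 1 with hv
  set T : Fin d → (EuclideanSpace ℝ (Fin d) →L[ℝ] ℝ) := fun k =>
    (γ / (d : ℝ)) • (∑ j : Fin d, EuclideanSpace.proj j) - (1 + γ) • EuclideanSpace.proj k
    with hT
  have hTval : ∀ k (y : EuclideanSpace ℝ (Fin d)),
      T k y = (γ / (d : ℝ)) * ∑ j, y j - (1 + γ) * y k := by
    intro k y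
    simp [hT, ContinuousLinearMap.sum_apply]
  have hG : ∀ k (y : EuclideanSpace ℝ (Fin d)),
      a t - y k + (γ / (d : ℝ)) * ∑ j : Fin d, (y j - y k) = a t + T k y := by
    intro k y
    rw [hTval, Finset.sum_sub_distrib, Finset.sum_const, Finset.card_univ, Fintype.card_fin,
      nsmul_eq_mul]
    field_simp
    ring
  set q : Fin d → 𝓢(EuclideanSpace ℝ (Fin d), ℝ) := fun k =>
    bilinLeftCLM (ContinuousLinearMap.mul ℝ ℝ) (affine_hasTemperateGrowth (a t) (T k)) (p t)
    with hq
  have hqval : ∀ k x, q k x = p t x * (a t + T k x) := fun k x => rfl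
  -- rewrite the PDE in terms of Schwartz maps
  have hp' : ∀ x, p' t x = ∑ k, (-(pderivCLM ℝ (v k) (q k)) x
      + ν * (pderivCLM ℝ (v k) (pderivCLM ℝ (v k) (p t))) x) := by
    intro x
    rw [hpde]
    refine Finset.sum_congr rfl fun k _ => ?_
    have e1 : (fun y : EuclideanSpace ℝ (Fin d) =>
        (a t - y k + (γ / (d : ℝ)) * ∑ j : Fin d, (y j - y k)) * p t y) = ⇑(q k) := by
      funext y
      rw [hqval, hG, mul_comm]
    have e2 : (fun y : EuclideanSpace ℝ (Fin d) => fderiv ℝ (p t) y (v k))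
        = ⇑(pderivCLM ℝ (v k) (p t)) := by
      funext y
      rw [pderivCLM_apply]
    rw [e1, e2]
    simp only [pderivCLM_apply, hv]
  have hint1 : ∀ k, Integrable (fun x : EuclideanSpace ℝ (Fin d) =>
      x i * (-(pderivCLM ℝ (v k) (q k)) x
        + ν * (pderivCLM ℝ (v k) (pderivCLM ℝ (v k) (p t))) x)) := by
    intro k
    have h1 := integrable_proj_mul i (pderivCLM ℝ (v k) (q k))
    have h2 := integrable_proj_mul i (pderivCLM ℝ (v k) (pderivCLM ℝ (v k) (p t)))
    refine (h1.neg.add (h2.const_mul ν)).congr ?_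
    filter_upwards with x
    simp only [Pi.add_apply, Pi.neg_apply]
    ring
  -- compute M (p' t)
  have hsum : M (p' t) = ∑ k, ∫ x : EuclideanSpace ℝ (Fin d),
      x i * (-(pderivCLM ℝ (v k) (q k)) x
        + ν * (pderivCLM ℝ (v k) (pderivCLM ℝ (v k) (p t))) x) := by
    rw [hMf]
    rw [show (fun x : EuclideanSpace ℝ (Fin d) => x i * p' t x)
        = fun x => ∑ k, x i * (-(pderivCLM ℝ (v k) (q k)) x
          + ν * (pderivCLM ℝ (v k) (pderivCLM ℝ (v k) (p t))) x) from
      funext fun x => by rw [hp' x, Finset.mul_sum]]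
    exact integral_finset_sum _ fun k _ => hint1 k
  have hterm : ∀ k, (∫ x : EuclideanSpace ℝ (Fin d),
      x i * (-(pderivCLM ℝ (v k) (q k)) x
        + ν * (pderivCLM ℝ (v k) (pderivCLM ℝ (v k) (p t))) x))
      = (if i = k then (1:ℝ) else 0) * ∫ x, q k x := by
    intro k
    have h1 := integrable_proj_mul i (pderivCLM ℝ (v k) (q k))
    have h2 := integrable_proj_mul i (pderivCLM ℝ (v k) (pderivCLM ℝ (v k) (p t)))
    have e : (fun x : EuclideanSpace ℝ (Fin d) =>
        x i * (-(pderivCLM ℝ (v k) (q k)) x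
          + ν * (pderivCLM ℝ (v k) (pderivCLM ℝ (v k) (p t))) x))
        = fun x => -(x i * (pderivCLM ℝ (v k) (q k)) x)
          + ν * (x i * (pderivCLM ℝ (v k) (pderivCLM ℝ (v k) (p t))) x) := by
      funext x; ring
    rw [e, integral_add ((h1.const_mul (-1)).congr (by filter_upwards with x; ring))
      (h2.const_mul ν), integral_neg, integral_const_mul]
    have hA : (∫ x : EuclideanSpace ℝ (Fin d), x i * (pderivCLM ℝ (v k) (q k)) x)
        = -(v k i * ∫ x, q k x) := by
      simpa only [pderivCLM_apply] using integral_proj_mul_fderiv i (v k) (q k)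
    have hB : (∫ x : EuclideanSpace ℝ (Fin d),
        x i * (pderivCLM ℝ (v k) (pderivCLM ℝ (v k) (p t))) x) = 0 := by
      have h0 := integral_fderiv_schwartz (v k) (p t)
      have h3 := integral_proj_mul_fderiv i (v k) (pderivCLM ℝ (v k) (p t))
      simp only [pderivCLM_apply] at h3 ⊢
      rw [h3, h0, mul_zero, neg_zero]
    rw [hA, hB]
    have hvki : v k i = if i = k then (1:ℝ) else 0 := by
      simp [hv, EuclideanSpace.single_apply]
    rw [hvki]
    ring
  have hqi : (∫ x : EuclideanSpace ℝ (Fin d), q i x)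
      = a t + (γ / (d : ℝ)) * ∑ j, Xbar j t - (1 + γ) * Xbar i t := by
    have e : (fun x : EuclideanSpace ℝ (Fin d) => q i x)
        = fun x => (a t * p t x + (γ / (d : ℝ)) * ∑ j, (x j * p t x))
          - (1 + γ) * (x i * p t x) := by
      funext x
      rw [hqval, hTval, ← Finset.sum_mul]
      ring
    have hintsum : Integrable (fun x : EuclideanSpace ℝ (Fin d) => ∑ j, x j * p t x) :=
      integrable_finset_sum _ fun j _ => integrable_proj_mul j (p t)
    have hint2 : Integrable (fun x : EuclideanSpace ℝ (Fin d) =>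
        a t * p t x + (γ / (d : ℝ)) * ∑ j, (x j * p t x)) :=
      (((p t).integrable).const_mul (a t)).add (hintsum.const_mul (γ / (d : ℝ)))
    rw [e, integral_sub hint2 ((integrable_proj_mul i (p t)).const_mul (1 + γ)),
      integral_add (((p t).integrable).const_mul (a t)) (hintsum.const_mul (γ / (d : ℝ))),
      integral_const_mul, integral_const_mul, integral_const_mul, hmass,
      integral_finset_sum _ (fun j _ => integrable_proj_mul j (p t))]
    simp only [← hXbar]
    ring
  have hfinal : M (p' t)
      = a t - Xbar i t + (γ / (d : ℝ)) * ∑ j : Fin d, (Xbar j t - Xbar i t) := by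
    have hpick : ∑ k, (if i = k then (1:ℝ) else 0) * ∫ x, q k x
        = ∫ x : EuclideanSpace ℝ (Fin d), q i x := by
      rw [Finset.sum_eq_single i]
      · simp
      · intro k _ hk
        simp [Ne.symm hk]
      · simp
    rw [hsum, Finset.sum_congr rfl fun k _ => hterm k, hpick, hqi,
      Finset.sum_sub_distrib, Finset.sum_const, Finset.card_univ, Fintype.card_fin,
      nsmul_eq_mul]
    field_simp
    ring
  rw [← hfinal]
  exact hD
end
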